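/- arXiv:1403.3781 — 2 statements merged into one kernel-verified Lean document; each statement's English description precedes it below -/
import Mathlib

section
/- Let H be an infinite-dimensional complex Hilbert space. For every k ≥ 1, the inductive geometric mean Gₖ is jointly homogeneous: for all scalars t₁,…,tₖ > 0 and every k-tuple (A₁,…,Aₖ) of positive definite invertible bounded operators on H, Gₖ(t₁A₁, …, tₖAₖ) = (t₁⋯tₖ)^{1/k} Gₖ(A₁,…,Aₖ). -/
set_option synthInstance.maxHeartbeats 400000
set_option maxHeartbeats 1000000

noncomputable section

variable {H : Type*} [NormedAddCommGroup H] [InnerProductSpace ℂ H] [CompleteSpace H]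

/-- `a` is a positive definite invertible bounded operator. -/
def IsPosDefInv (a : H →L[ℂ] H) : Prop := 0 ≤ a ∧ IsUnit a

/-- The inductive geometric mean: `indGM k` is the geometric mean `G_{k+1}` of `k+1`
operator variables, defined recursively by `G₁(A) = A` and
`G_{k+1}(A₁,…,A_{k+1}) = A_{k+1}^{1/2} Gₖ(A_{k+1}^{-1/2}A₁A_{k+1}^{-1/2},…,A_{k+1}^{-1/2}AₖA_{k+1}^{-1/2})^{k/(k+1)} A_{k+1}^{1/2}`,
with fractional powers taken via the continuous functional calculus. -/
noncomputable def indGM : (k : ℕ) → (Fin (k + 1) → (H →L[ℂ] H)) → (H →L[ℂ] H)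
  | 0, A => A 0
  | (k + 1), A =>
      CFC.sqrt (A (Fin.last (k + 1))) *
        CFC.rpow
          (indGM k (fun i : Fin (k + 1) =>
            CFC.sqrt (Ring.inverse (A (Fin.last (k + 1)))) * A i.castSucc *
              CFC.sqrt (Ring.inverse (A (Fin.last (k + 1))))))
          ((k + 1 : ℝ) / (k + 2)) *
        CFC.sqrt (A (Fin.last (k + 1)))


/-!
Induction on the number of variables. Scaling the last of `k + 2` operators, `a`, by `c > 0`
scales `a^{1/2}` by `√c` and `a^{-1/2}` by `(√c)⁻¹`, so the inner arguments of the recursion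
are the old ones scaled by `tᵢ / c`. Positive scalars pass through the continuous functional
calculus (`(c • x)^y = c^y • x^y`), so the induction hypothesis pulls out
`(∏ tᵢ / c^{k+1})^{1/(k+1)}`, and after the outer power and conjugation this becomes
`(c · ∏ tᵢ)^{1/(k+2)}`.
-/

open scoped NNReal

lemma Ring.inverse_smul {𝕜 A : Type*} [Semifield 𝕜] [Semiring A] [Algebra 𝕜 A] {c : 𝕜}
    (hc : c ≠ 0) (a : A) : Ring.inverse (c • a) = c⁻¹ • Ring.inverse a := by
  set u := Units.mk0 c hc
  change Ring.inverse (u • a) = u⁻¹ • Ring.inverse a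
  by_cases ha : IsUnit a
  · obtain ⟨v, rfl⟩ := ha
    simpa [smul_inv] using Ring.inverse_unit (u • v)
  · rw [Ring.inverse_non_unit _ ha, Ring.inverse_non_unit _ (by rwa [isUnit_smul_iff]), smul_zero]

namespace CFC

variable {A : Type*} [CStarAlgebra A] [PartialOrder A] [StarOrderedRing A]

lemma sqrt_smul {c : ℝ} (hc : 0 ≤ c) {a : A} (ha : 0 ≤ a) :
    sqrt (c • a) = √c • sqrt a :=
  sqrt_unique (by rw [smul_mul_smul_comm, Real.mul_self_sqrt hc, sqrt_mul_sqrt_self a])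
    (smul_nonneg (Real.sqrt_nonneg c) (sqrt_nonneg a))

lemma rpow_smul {c : ℝ} (hc : 0 ≤ c) {a : A} (ha : 0 ≤ a) {y : ℝ} (hy : 0 ≤ y) :
    (c • a) ^ y = c ^ y • a ^ y := by
  lift c to ℝ≥0 using hc
  have hcont : Continuous (· ^ y : ℝ≥0 → ℝ≥0) := NNReal.continuous_rpow_const hy
  rw [← NNReal.coe_rpow, ← NNReal.smul_def, ← NNReal.smul_def, rpow_def, rpow_def,
    ← cfc_comp_smul c _ a hcont.continuousOn, ← cfc_smul _ _ a hcont.continuousOn]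
  exact cfc_congr fun x _ => NNReal.mul_rpow

lemma sqrt_ringInverse_smul {c : ℝ} (hc : 0 < c) {a : A} (ha : 0 ≤ a) :
    sqrt (Ring.inverse (c • a)) = (√c)⁻¹ • sqrt (Ring.inverse a) := by
  rw [sqrt_ringInverse, sqrt_ringInverse, sqrt_smul hc.le ha,
    Ring.inverse_smul (Real.sqrt_pos.2 hc).ne']

lemma sqrt_ringInverse_smul_conj {c : ℝ} (hc : 0 < c) {a : A} (ha : 0 ≤ a) (d : ℝ) (b : A) :
    sqrt (Ring.inverse (c • a)) * (d • b) * sqrt (Ring.inverse (c • a)) =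
      (d / c) • (sqrt (Ring.inverse a) * b * sqrt (Ring.inverse a)) := by
  rw [sqrt_ringInverse_smul hc ha, smul_mul_smul_comm, smul_mul_smul_comm]
  congr 1
  rw [mul_comm, ← mul_assoc, ← mul_inv, Real.mul_self_sqrt hc.le, inv_mul_eq_div]

end CFC

lemma Real.sqrt_mul_rpow_mul_sqrt (k : ℕ) {c : ℝ} (hc : 0 < c) {P : ℝ} (hP : 0 ≤ P) :
    √c * ((P / c ^ (k + 1)) ^ ((k + 1 : ℝ)⁻¹)) ^ ((k + 1 : ℝ) / (k + 2)) * √c =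
      (P * c) ^ ((k + 2 : ℝ)⁻¹) := by
  have hQ : 0 ≤ P / c ^ (k + 1) := by positivity
  have hexp : (k + 1 : ℝ)⁻¹ * ((k + 1) / (k + 2)) = (k + 2 : ℝ)⁻¹ := by field_simp
  have hc' : c = (c ^ (k + 2)) ^ ((k + 2 : ℝ)⁻¹) := by
    exact_mod_cast (Real.pow_rpow_inv_natCast hc.le (by omega : k + 2 ≠ 0)).symm
  calc √c * ((P / c ^ (k + 1)) ^ ((k + 1 : ℝ)⁻¹)) ^ ((k + 1 : ℝ) / (k + 2)) * √c
      = (c ^ (k + 2)) ^ ((k + 2 : ℝ)⁻¹) * (P / c ^ (k + 1)) ^ ((k + 2 : ℝ)⁻¹) := by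
        rw [mul_right_comm, Real.mul_self_sqrt hc.le, ← Real.rpow_mul hQ, hexp, ← hc']
    _ = (P * c) ^ ((k + 2 : ℝ)⁻¹) := by
        rw [← Real.mul_rpow (by positivity) hQ]
        congr 1
        field_simp
        ring

lemma indGM_nonneg (k : ℕ) (A : Fin (k + 1) → (H →L[ℂ] H)) (hA : ∀ i, 0 ≤ A i) :
    0 ≤ indGM k A := by
  cases k with
  | zero => exact hA 0
  | succ k => exact conjugate_nonneg_of_nonneg CFC.rpow_nonneg (CFC.sqrt_nonneg _)

theorem indGM_jointly_homogeneous_general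
    (k : ℕ)
    (t : Fin (k + 1) → ℝ) (ht : ∀ i, 0 < t i)
    (A : Fin (k + 1) → (H →L[ℂ] H)) (hA : ∀ i, IsPosDefInv (A i)) :
    indGM k (fun i => t i • A i) =
      ((∏ i, t i) ^ (((k : ℝ) + 1)⁻¹)) • indGM k A := by
  change ∀ i, IsStrictlyPositive (A i) at hA
  induction k with
  | zero => simp [indGM]
  | succ k ih =>
    rw [indGM, indGM]
    set L := Fin.last (k + 1)
    set C := CFC.sqrt (Ring.inverse (A L))
    have hC : IsStrictlyPositive C := IsStrictlyPositive.sqrt _ (hA L).ringInverse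
    have hB (i : Fin (k + 1)) : IsStrictlyPositive (C * A i.castSucc * C) :=
      IsStrictlyPositive.conjugate_of_isUnit_of_isSelfAdjoint _ _ hC.isUnit hC.isSelfAdjoint (hA _)
    have hs (i : Fin (k + 1)) : 0 < t i.castSucc / t L := div_pos (ht _) (ht L)
    simp_rw [CFC.sqrt_ringInverse_smul_conj (ht L) (hA L).nonneg]
    rw [ih _ hs _ hB, CFC.rpow_eq_pow, CFC.rpow_eq_pow,
      CFC.rpow_smul (Real.rpow_nonneg (Finset.prod_nonneg fun i _ => (hs i).le) _)
        (indGM_nonneg _ _ fun i => (hB i).nonneg) (by positivity),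
      CFC.sqrt_smul (ht L).le (hA L).nonneg, smul_mul_smul_comm, smul_mul_smul_comm]
    congr 1
    rw [Finset.prod_div_distrib, Finset.prod_const, Finset.card_univ, Fintype.card_fin,
      Real.sqrt_mul_rpow_mul_sqrt k (ht L) (Finset.prod_nonneg fun i _ => (ht _).le),
      Fin.prod_univ_castSucc t, Nat.cast_succ, add_assoc, one_add_one_eq_two]

/-- **Joint homogeneity of the inductive geometric mean.**
`Gₖ(t₁A₁,…,tₖAₖ) = (t₁⋯tₖ)^{1/k} Gₖ(A₁,…,Aₖ)` for positive scalars `t₁,…,tₖ`. -/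
theorem indGM_jointly_homogeneous
    (hH : ¬ FiniteDimensional ℂ H) (k : ℕ)
    (t : Fin (k + 1) → ℝ) (ht : ∀ i, 0 < t i)
    (A : Fin (k + 1) → (H →L[ℂ] H)) (hA : ∀ i, IsPosDefInv (A i)) :
    indGM k (fun i => t i • A i) =
      ((∏ i, t i) ^ (((k : ℝ) + 1)⁻¹)) • indGM k A :=
  indGM_jointly_homogeneous_general k t ht A hA
end
end

section
/- Let H be an infinite-dimensional complex Hilbert space. For every k ≥ 1, the inductive geometric mean Gₖ is self-dual: for every k-tuple (A₁,…,Aₖ) of positive definite invertible bounded operators on H, Gₖ(A₁^{−1}, …, Aₖ^{−1}) = Gₖ(A₁,…,Aₖ)^{−1}. -/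
set_option synthInstance.maxHeartbeats 400000
set_option maxHeartbeats 1000000

noncomputable section

variable {H : Type*} [NormedAddCommGroup H] [InnerProductSpace ℂ H] [CompleteSpace H]

/-!
Both building blocks of the recursion commute with inversion of strictly positive elements:
`(a⁻¹)^x = (a^x)⁻¹` and `(√c a √c)⁻¹ = √(c⁻¹) a⁻¹ √(c⁻¹)`. Inverting the tuple therefore
inverts every argument of the inner mean; the induction hypothesis inverts the inner mean itself,
and the two rules carry the inversion through the outer power and conjugation.
-/

open CFC
open scoped Ring

namespace CFC

variable {A : Type*} [PartialOrder A] [Ring A] [StarRing A] [TopologicalSpace A]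
  [StarOrderedRing A] [Algebra ℝ A] [ContinuousFunctionalCalculus ℝ A IsSelfAdjoint]
  [NonnegSpectrumClass ℝ A] [IsSemitopologicalRing A] [T2Space A]

lemma ringInverse_rpow (a : A) (x : ℝ) (ha : IsStrictlyPositive a) :
    a⁻¹ʳ ^ x = (a ^ x)⁻¹ʳ := by
  have hneg : a⁻¹ʳ ^ x = a ^ (-x) := by
    rw [inverse_eq_rpow_neg_one ha, rpow_rpow a _ _ (by norm_num) ha, neg_one_mul]
  rw [hneg, ← Ring.inverse_mul_cancel_left (a ^ x) (a ^ (-x)) (ha.rpow a x).isUnit,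
    rpow_mul_rpow_neg x ha, mul_one]

end CFC

lemma indGM_succ (k : ℕ) (A : Fin (k + 2) → (H →L[ℂ] H)) :
    indGM (k + 1) A =
      conjSqrt (A (Fin.last (k + 1)))
        (indGM k (fun i => conjSqrt (A (Fin.last (k + 1)))⁻¹ʳ (A i.castSucc)) ^
          ((k + 1 : ℝ) / (k + 2))) :=
  rfl

lemma isStrictlyPositive_indGM (k : ℕ) (A : Fin (k + 1) → (H →L[ℂ] H))
    (hA : ∀ i, IsStrictlyPositive (A i)) : IsStrictlyPositive (indGM k A) := by
  induction k with
  | zero => exact hA 0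
  | succ k ih =>
    have hc := hA (Fin.last (k + 1))
    rw [indGM_succ, isStrictlyPositive_conjSqrt_iff _ _ hc]
    refine IsStrictlyPositive.rpow _ _ (ih _ fun i => ?_)
    exact (isStrictlyPositive_conjSqrt_iff _ (A i.castSucc) hc.ringInverse).mpr (hA i.castSucc)

theorem indGM_self_dual_general
    (k : ℕ)
    (A : Fin (k + 1) → (H →L[ℂ] H)) (hA : ∀ i, IsPosDefInv (A i)) :
    indGM k (fun i => Ring.inverse (A i)) = Ring.inverse (indGM k A) := by
  induction k with
  | zero => rfl
  | succ k ih =>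
    rw [indGM_succ, indGM_succ]
    set c := A (Fin.last (k + 1))
    have hc : IsStrictlyPositive c := hA _
    have hB : ∀ i : Fin (k + 1), IsPosDefInv (conjSqrt c⁻¹ʳ (A i.castSucc)) := fun i =>
      (isStrictlyPositive_conjSqrt_iff _ _ hc.ringInverse).mpr (hA i.castSucc)
    have hinner : ∀ i : Fin (k + 1),
        conjSqrt c⁻¹ʳ⁻¹ʳ (A i.castSucc)⁻¹ʳ = (conjSqrt c⁻¹ʳ (A i.castSucc))⁻¹ʳ := fun i =>
      (ringInverse_conjSqrt _ _ hc.ringInverse).symm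
    simp only [hinner]
    rw [ih _ hB, ringInverse_rpow _ _ (isStrictlyPositive_indGM k _ hB),
      ringInverse_conjSqrt _ _ hc]

/-- **Self-duality of the inductive geometric mean.**
`Gₖ(A₁⁻¹,…,Aₖ⁻¹) = Gₖ(A₁,…,Aₖ)⁻¹` for positive definite invertible operators. -/
theorem indGM_self_dual
    (hH : ¬ FiniteDimensional ℂ H) (k : ℕ)
    (A : Fin (k + 1) → (H →L[ℂ] H)) (hA : ∀ i, IsPosDefInv (A i)) :
    indGM k (fun i => Ring.inverse (A i)) = Ring.inverse (indGM k A) :=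
  indGM_self_dual_general k A hA
end
end
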